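/- For every n ≥ 1 there exists a pushdown automaton with 3n+3 states and two stack symbols, whose language is exactly the set of words of length 2^{n+1} over a designated input alphabet Γ₂, and whose stack height never exceeds n along any accepting run. -/

import Mathlib

/-- A stack operation of a pushdown automaton. -/
inductive StackOp (Γ : Type*) where
  | push (γ : Γ)
  | pop (γ : Γ)
  | nop

/-- The effect of a stack operation: `op.apply s s'` means performing `op`
on stack `s` yields stack `s'`. -/
def StackOp.apply {Γ : Type*} : StackOp Γ → List Γ → List Γ → Prop
  | .push γ, s, s' => s' = γ :: s
  | .pop γ, s, s' => s = γ :: s'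
  | .nop, s, s' => s' = s

/-- A pushdown automaton with states `Q`, stack symbols `Γ` and input alphabet `σ`.
Transitions read a letter or `ε` (`Option σ`) and perform one stack operation. -/
structure PDA (Q Γ σ : Type*) where
  trans : Set (Q × Option σ × StackOp Γ × Q)
  start : Q
  final : Set Q

/-- `P.Steps c w c' h` : there is a run of `P` from configuration `c` to `c'`
reading the word `w`, whose maximal stack height (over all configurations
of the run, endpoints included) is `h`. -/
inductive PDA.Steps {Q Γ σ : Type*} (P : PDA Q Γ σ) :
    Q × List Γ → List σ → Q × List Γ → ℕ → Prop where
  | refl (c : Q × List Γ) : PDA.Steps P c [] c c.2.length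
  | step {q q' : Q} {a : Option σ} {op : StackOp Γ} {s s' : List Γ}
      {w : List σ} {c : Q × List Γ} {h : ℕ} :
      (q, a, op, q') ∈ P.trans → op.apply s s' →
      PDA.Steps P (q', s') w c h →
      PDA.Steps P (q, s) (a.toList ++ w) c (max s.length h)

/-- The language of a PDA: acceptance by final state and empty stack,
starting from the initial state with empty stack. -/
def PDA.language {Q Γ σ : Type*} (P : PDA Q Γ σ) : Set (List σ) :=
  {w | ∃ f ∈ P.final, ∃ h, P.Steps (P.start, []) w (f, []) h}

/-!
In state `down k` the automaton reads a block of `2 ^ (k + 1)` letters and ends in `up k` with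
the stack restored. A block at level `k + 1` is read as two blocks at level `k`, the first
under a marker `0` and the second under a marker `1`, so the stack is a binary counter of
height at most `n`. Conversely, along any run the stack height plus the level of the state
stays equal to `n`, and the number of letters still to be read — the block due in the
current state plus the second halves owed by the `0` markers — drops by exactly one per
letter read; it is `2 ^ (n + 1)` at the start and `0` at acceptance.
-/

namespace PDA

variable {Q Q' Γ σ : Type*} {P : PDA Q Γ σ}

theorem Steps.start_length_le {c c' : Q × List Γ} {w : List σ} {h : ℕ}
    (hs : P.Steps c w c' h) : c.2.length ≤ h := by
  cases hs with
  | refl => exact le_rfl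
  | step => exact le_max_left _ _

theorem Steps.append {c c' c'' : Q × List Γ} {w w' : List σ} {h h' : ℕ}
    (hs : P.Steps c w c' h) (hs' : P.Steps c' w' c'' h') :
    P.Steps c (w ++ w') c'' (max h h') := by
  induction hs with
  | refl => simpa [max_eq_right hs'.start_length_le] using hs'
  | step ht ha _ ih => simpa [max_assoc] using Steps.step ht ha (ih hs')

def map (e : Q ≃ Q') (P : PDA Q Γ σ) : PDA Q' Γ σ where
  trans := {t | (e.symm t.1, t.2.1, t.2.2.1, e.symm t.2.2.2) ∈ P.trans}
  start := e P.start
  final := e '' P.final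

theorem Steps.map (e : Q ≃ Q') {c c' : Q × List Γ} {w : List σ} {h : ℕ}
    (hs : P.Steps c w c' h) : (P.map e).Steps (e c.1, c.2) w (e c'.1, c'.2) h := by
  induction hs with
  | refl => exact .refl _
  | step ht ha _ ih => exact .step (show _ ∈ (P.map e).trans by simpa [PDA.map] using ht) ha ih

theorem Steps.of_map (e : Q ≃ Q') {c c' : Q' × List Γ} {w : List σ} {h : ℕ}
    (hs : (P.map e).Steps c w c' h) : P.Steps (e.symm c.1, c.2) w (e.symm c'.1, c'.2) h := by
  induction hs with
  | refl => exact .refl _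
  | step ht ha _ ih => exact .step ht ha ih

theorem language_map (e : Q ≃ Q') : (P.map e).language = P.language := by
  ext w
  constructor
  · rintro ⟨_, ⟨f, hf, rfl⟩, h, hs⟩
    exact ⟨f, hf, h, by simpa [PDA.map] using hs.of_map e⟩
  · rintro ⟨f, hf, h, hs⟩
    exact ⟨e f, ⟨f, hf, rfl⟩, h, hs.map e⟩

end PDA

namespace CountingPDA

/-- States `down k`, `up k` (`k ≤ n`), `turn k` (`k < n`) and `middle`: `3n+3` in all. -/
abbrev State (n : ℕ) : Type := Fin (n + 1) ⊕ (Fin (n + 1) ⊕ (Fin n ⊕ Unit))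

variable {n : ℕ} {σ : Type*}

def down (k : Fin (n + 1)) : State n := .inl k
def up (k : Fin (n + 1)) : State n := .inr (.inl k)
def turn (k : Fin n) : State n := .inr (.inr (.inl k))
def middle : State n := .inr (.inr (.inr ()))

variable (n σ) in
inductive Trans : State n × Option σ × StackOp (Fin 2) × State n → Prop
  | pushZero (k : Fin n) : Trans (down k.succ, none, .push 0, down k.castSucc)
  | readFirst (a : σ) : Trans (down 0, some a, .nop, middle)
  | readSecond (a : σ) : Trans (middle, some a, .nop, up 0)
  | popZero (k : Fin n) : Trans (up k.castSucc, none, .pop 0, turn k)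
  | pushOne (k : Fin n) : Trans (turn k, none, .push 1, down k.castSucc)
  | popOne (k : Fin n) : Trans (up k.castSucc, none, .pop 1, up k.succ)

variable (n σ) in
def pda : PDA (State n) (Fin 2) σ where
  trans := {t | Trans n σ t}
  start := down (Fin.last n)
  final := {up (Fin.last n)}

def level : State n → ℕ
  | .inl k => k
  | .inr (.inl k) => k
  | .inr (.inr (.inl k)) => k + 1
  | .inr (.inr (.inr ())) => 0

def due : State n → ℕ
  | .inl k => 2 ^ ((k : ℕ) + 1)
  | .inr (.inl _) => 0
  | .inr (.inr (.inl k)) => 2 ^ ((k : ℕ) + 1)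
  | .inr (.inr (.inr ())) => 1

/-- Letters still owed by the markers on a stack whose top sits at level `ℓ + 1`: a `0` there
means the second half of a block, `2 ^ (ℓ + 1)` letters, is yet to be read. -/
def owed : ℕ → List (Fin 2) → ℕ
  | _, [] => 0
  | ℓ, b :: s => (if b = 0 then 2 ^ (ℓ + 1) else 0) + owed (ℓ + 1) s

def remaining (c : State n × List (Fin 2)) : ℕ := due c.1 + owed (level c.1) c.2

theorem Trans.steps {q q' : State n} {a : Option σ} {op : StackOp (Fin 2)}
    {s s' : List (Fin 2)} {w : List σ} {c : State n × List (Fin 2)} {h : ℕ}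
    (ht : Trans n σ (q, a, op, q')) (ha : op.apply s s') (hs : (pda n σ).Steps (q', s') w c h) :
    (pda n σ).Steps (q, s) (a.toList ++ w) c (max s.length h) :=
  .step ht ha hs

theorem Trans.preserves {q q' : State n} {a : Option σ} {op : StackOp (Fin 2)}
    {s s' : List (Fin 2)} (ht : Trans n σ (q, a, op, q')) (ha : op.apply s s')
    (hinv : s.length + level q = n) :
    s'.length + level q' = n ∧ remaining (q, s) = a.toList.length + remaining (q', s') := by
  cases ht <;> simp only [StackOp.apply] at ha <;> subst ha <;>
    simp_all [level, remaining, due, owed, down, up, turn, middle, pow_succ] <;> omega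

theorem steps_invariant {c c' : State n × List (Fin 2)} {w : List σ} {h : ℕ}
    (hs : (pda n σ).Steps c w c' h) (hinv : c.2.length + level c.1 = n) :
    c'.2.length + level c'.1 = n ∧ remaining c = w.length + remaining c' ∧ h ≤ n := by
  induction hs with
  | refl => exact ⟨hinv, by simp, by omega⟩
  | step ht ha _ ih =>
    dsimp only at hinv
    obtain ⟨hinv', hrem⟩ := Trans.preserves ht ha hinv
    obtain ⟨hinv'', hrem', hh⟩ := ih hinv'
    refine ⟨hinv'', ?_, max_le (by omega) hh⟩
    rw [hrem, hrem', List.length_append]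
    omega

theorem exists_steps_down_up (k : Fin (n + 1)) (s : List (Fin 2)) (w : List σ)
    (hw : w.length = 2 ^ ((k : ℕ) + 1)) : ∃ h, (pda n σ).Steps (down k, s) w (up k, s) h := by
  induction k using Fin.induction generalizing s w with
  | zero =>
    obtain ⟨a, b, rfl⟩ := List.length_eq_two.mp (by simpa using hw)
    exact ⟨_, (Trans.readFirst a).steps rfl <| (Trans.readSecond b).steps rfl (.refl _)⟩
  | succ k ih =>
    have hw₁ : (w.take (2 ^ ((k : ℕ) + 1))).length = 2 ^ ((k : ℕ) + 1) := by
      simp [hw, pow_succ]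
    have hw₂ : (w.drop (2 ^ ((k : ℕ) + 1))).length = 2 ^ ((k : ℕ) + 1) := by
      simp only [List.length_drop, hw, Fin.val_succ, pow_succ]; omega
    obtain ⟨_, hs₁⟩ := ih (0 :: s) _ hw₁
    obtain ⟨_, hs₂⟩ := ih (1 :: s) _ hw₂
    have hs := (Trans.pushZero k).steps rfl <| hs₁.append <|
      (Trans.popZero k).steps rfl <| (Trans.pushOne k).steps rfl <| hs₂.append <|
      (Trans.popOne k).steps rfl (.refl _)
    rw [← w.take_append_drop (2 ^ ((k : ℕ) + 1))]
    exact ⟨_, by simpa using hs⟩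

theorem language : (pda n σ).language = {w | w.length = 2 ^ (n + 1)} := by
  ext w
  constructor
  · rintro ⟨f, rfl, h, hs⟩
    have := (steps_invariant hs (by simp [pda, level, down])).2.1
    simpa [remaining, pda, due, level, owed, down, up] using this.symm
  · intro hw
    obtain ⟨h, hs⟩ := exists_steps_down_up (Fin.last n) [] w (by simpa using hw)
    exact ⟨_, rfl, h, hs⟩

theorem height_le_of_steps_start {w : List σ} {c : State n × List (Fin 2)} {h : ℕ}
    (hs : (pda n σ).Steps ((pda n σ).start, []) w c h) : h ≤ n :=
  (steps_invariant hs (by simp [pda, level, down])).2.2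

end CountingPDA

theorem exists_pda_counting_exp_succ_general (n : ℕ) (Γ₂ : Type) :
    ∃ P : PDA (Fin (3 * n + 3)) (Fin 2) Γ₂,
      P.language = {w : List Γ₂ | w.length = 2 ^ (n + 1)} ∧
      ∀ (w : List Γ₂) (f : Fin (3 * n + 3)) (h : ℕ),
        f ∈ P.final → P.Steps (P.start, []) w (f, []) h → h ≤ n := by
  have e : CountingPDA.State n ≃ Fin (3 * n + 3) :=
    Fintype.equivFinOfCardEq (by simp; omega)
  refine ⟨(CountingPDA.pda n Γ₂).map e, by rw [PDA.language_map, CountingPDA.language], ?_⟩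
  rintro w _ h ⟨f, -, rfl⟩ hs
  exact CountingPDA.height_le_of_steps_start (by simpa [PDA.map] using hs.of_map e)

/-- for every `n ≥ 1` there is a PDA with `3n+3` states and two stack
symbols accepting exactly the words of length `2^(n+1)` over the input alphabet `Γ₂`,
with stack height never exceeding `n` along any accepting run. -/
theorem exists_pda_counting_exp_succ (n : ℕ) (hn : 1 ≤ n) (Γ₂ : Type) :
    ∃ P : PDA (Fin (3 * n + 3)) (Fin 2) Γ₂,
      P.language = {w : List Γ₂ | w.length = 2 ^ (n + 1)} ∧
      ∀ (w : List Γ₂) (f : Fin (3 * n + 3)) (h : ℕ),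
        f ∈ P.final → P.Steps (P.start, []) w (f, []) h → h ≤ n :=
  exists_pda_counting_exp_succ_general n Γ₂
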